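/- Let $A \in \mathbb{C}^{n\times n}$ be diagonalizable with eigendecomposition $A = \sum_{h=1}^n \lambda_h x_h y_h^*$ (where $y_h^* x_k = \delta_{hk}$), let $f$ be holomorphic on a neighborhood of the spectra of $A$ and $A_j$, and consider the Galerkin block (polynomial) Krylov approximation $F_j = \mathbf{U}_j f(A_j) E_1 R_B$ of $f(A)B$, with $A_j = \mathbf{U}_j^*A\mathbf{U}_j$ block upper Hessenberg from the block Arnoldi relation $A\mathbf{U}_j = \mathbf{U}_jA_j + U_{j+1}\Gamma_{j+1}E_j^*$ and $B = \mathbf{U}_jE_1R_B$. Then $f(A)B - F_j = \sum_{h=1}^n x_h y_h^*\, U_{j+1}\Gamma_{j+1}\, E_j^*\, [f(A_j) - f(\lambda_h)I]\,(A_j - \lambda_h I)^{-1}\, E_1 R_B$ (assuming $\lambda_h$ is not an eigenvalue of $A_j$ for all $h$). -/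
import Mathlib


open Matrix Polynomial

abbrev Mat (s : ℕ) := Matrix (Fin s) (Fin s) ℂ

/-- The `(p,q)` block (of size `s × s`) of a `js × js` block matrix. -/
def blk {j s : ℕ} (H : Matrix (Fin j × Fin s) (Fin j × Fin s) ℂ) (p q : Fin j) :
    Mat s := Matrix.of fun a b => H (p, a) (q, b)

/-- The `i`-th block canonical vector `E_i = e_i ⊗ I_s`. -/
def blkE {j s : ℕ} (i : Fin j) : Matrix (Fin j × Fin s) (Fin s) ℂ :=
  Matrix.of fun pa b => if pa.1 = i ∧ pa.2 = b then 1 else 0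

/-- Block upper Hessenberg: all blocks strictly below the first subdiagonal vanish. -/
def BUH {j s : ℕ} (H : Matrix (Fin j × Fin s) (Fin j × Fin s) ℂ) : Prop :=
  ∀ p q : Fin j, (q : ℕ) + 1 < (p : ℕ) → blk H p q = 0

/-- The action `P(N) ∘ W := ∑ᵢ Nⁱ W Pᵢ` of a matrix polynomial on a block vector. -/
noncomputable def act {n : Type*} [Fintype n] [DecidableEq n] {s : ℕ}
    (P : Polynomial (Mat s)) (N : Matrix n n ℂ) (W : Matrix n (Fin s) ℂ) :
    Matrix n (Fin s) ℂ :=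
  ∑ i ∈ Finset.range (P.natDegree + 1), (N ^ i) * W * P.coeff i

/-- Evaluation of a matrix polynomial at a scalar: `P(z) = ∑ᵢ zⁱ Pᵢ`. -/
noncomputable def evalS {s : ℕ} (P : Polynomial (Mat s)) (z : ℂ) : Mat s :=
  ∑ i ∈ Finset.range (P.natDegree + 1), z ^ i • P.coeff i

/-- The subdiagonal block `Γ_i = H_{(i-1)(i-2)}` (paper indexing, `2 ≤ i ≤ j`),
with the convention `Γ_i = I` out of range (in particular `Γ₁ = I`). -/
noncomputable def Gam {j s : ℕ} (H : Matrix (Fin j × Fin s) (Fin j × Fin s) ℂ)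
    (i : ℕ) : Mat s :=
  if h : 2 ≤ i ∧ i ≤ j then blk H ⟨i - 1, by omega⟩ ⟨i - 2, by omega⟩ else 1

lemma outer_decomp {n : ℕ} (X Y : Matrix (Fin n) (Fin n) ℂ) (d : Fin n → ℂ) :
    X * Matrix.diagonal d * Y
      = ∑ h, d h • Matrix.vecMulVec (fun p => X p h) (fun q => Y h q) := by
  ext p q
  simp only [Matrix.mul_apply, Matrix.sum_apply, Matrix.smul_apply, Matrix.vecMulVec_apply,
    smul_eq_mul, Matrix.diagonal_apply, mul_ite, mul_zero, ite_mul, zero_mul,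
    Finset.sum_ite_eq', Finset.mem_univ, if_true]
  exact Finset.sum_congr rfl fun h _ => by ring

lemma arnoldi_pow {n m : Type*} [Fintype n] [DecidableEq n] [Fintype m] [DecidableEq m]
    (A : Matrix n n ℂ) (U : Matrix n m ℂ) (M : Matrix m m ℂ) (C : Matrix n m ℂ)
    (h : A * U = U * M + C) (k : ℕ) :
    A ^ k * U = U * M ^ k + ∑ i ∈ Finset.range k, A ^ i * C * M ^ (k - 1 - i) := by
  induction k with
  | zero => simp
  | succ k ih =>
    have step : A ^ (k + 1) * U = (A ^ k * U) * M + A ^ k * C := by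
      rw [pow_succ, Matrix.mul_assoc, h, Matrix.mul_add, ← Matrix.mul_assoc]
    rw [step, ih, Matrix.add_mul, Matrix.mul_assoc U, ← pow_succ]
    rw [Finset.sum_range_succ]
    have hlast : k + 1 - 1 - k = 0 := by omega
    rw [hlast, pow_zero, Matrix.mul_one, Matrix.sum_mul, add_assoc]
    congr 1
    congr 1
    refine Finset.sum_congr rfl fun i hi => ?_
    simp only [Finset.mem_range] at hi
    have h1 : k + 1 - 1 - i = (k - 1 - i) + 1 := by omega
    rw [h1, pow_succ, ← Matrix.mul_assoc]

lemma geom_aux {m : Type*} [Fintype m] [DecidableEq m] (M : Matrix m m ℂ) (z : ℂ)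
    (hdet : IsUnit (M - z • 1).det) (k : ℕ) :
    ∑ i ∈ Finset.range k, z ^ i • M ^ (k - 1 - i)
      = (M ^ k - z ^ k • 1) * (M - z • 1)⁻¹ := by
  have key : (∑ i ∈ Finset.range k, z ^ i • M ^ (k - 1 - i)) * (M - z • 1)
      = M ^ k - z ^ k • 1 := by
    rw [Finset.sum_mul]
    have hterm : ∀ i ∈ Finset.range k,
        (z ^ i • M ^ (k - 1 - i)) * (M - z • 1)
          = (fun i => z ^ i • M ^ (k - i)) i - (fun i => z ^ i • M ^ (k - i)) (i + 1) := by
      intro i hi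
      simp only [Finset.mem_range] at hi
      have h1 : k - 1 - i + 1 = k - i := by omega
      have h2 : k - (i + 1) = k - 1 - i := by omega
      simp only [h2]
      rw [smul_mul_assoc, Matrix.mul_sub, ← pow_succ, h1, mul_smul_comm, Matrix.mul_one,
        smul_sub, smul_smul, ← pow_succ]
    rw [Finset.sum_congr rfl hterm, Finset.sum_range_sub']
    simp
  rw [← key, mul_assoc, Matrix.mul_nonsing_inv _ hdet, mul_one]

/-- error formula for the Galerkin block Krylov approximation of
`f(A)B`, for `A` diagonalizable with eigendecomposition `A = ∑ λₕ xₕ yₕ*`: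
`f(A)B − F_j = ∑ₕ xₕ yₕ* U_{j+1} Γ_{j+1} E_j* [f(A_j) − f(λₕ)I](A_j − λₕI)⁻¹ E₁ R_B`.
Here `f` is represented on the spectra of `A` and `A_j` by a polynomial `p`
(as produced by the holomorphic functional calculus), so that `f(A) = p(A)`,
`f(A_j) = p(A_j)` and `f(λₕ) = p(λₕ)`. -/
theorem matfun_error_formula {n j s : ℕ} (hj : 0 < j)
    (A : Matrix (Fin n) (Fin n) ℂ)
    (X : Matrix (Fin n) (Fin n) ℂ) (hX : IsUnit X) (lam : Fin n → ℂ)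
    (hA : A = X * Matrix.diagonal lam * X⁻¹)
    (U : Matrix (Fin n) (Fin j × Fin s) ℂ)
    (u : Matrix (Fin n) (Fin s) ℂ) (Γ : Mat s)
    (Aj : Matrix (Fin j × Fin s) (Fin j × Fin s) ℂ)
    (hAj : Aj = Uᴴ * A * U) (hBUHAj : BUH Aj)
    (harn : A * U = U * Aj + u * Γ * (blkE (s := s) (⟨j - 1, by omega⟩ : Fin j))ᴴ)
    (hU : Uᴴ * U = 1) (hu : uᴴ * u = 1) (hUu : Uᴴ * u = 0)
    (RB : Mat s) (hRB : IsUnit RB)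
    (B : Matrix (Fin n) (Fin s) ℂ)
    (hB : B = U * blkE (s := s) (⟨0, hj⟩ : Fin j) * RB)
    (f : ℂ → ℂ) (fA : Matrix (Fin n) (Fin n) ℂ)
    (fAj : Matrix (Fin j × Fin s) (Fin j × Fin s) ℂ)
    (hf : ∃ p : Polynomial ℂ, fA = Polynomial.aeval A p ∧
      fAj = Polynomial.aeval Aj p ∧ ∀ h : Fin n, f (lam h) = Polynomial.eval (lam h) p)
    (hspec : ∀ h : Fin n,
      ((lam h) • (1 : Matrix (Fin j × Fin s) (Fin j × Fin s) ℂ) - Aj).det ≠ 0)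
    (Fj : Matrix (Fin n) (Fin s) ℂ)
    (hFj : Fj = U * (fAj * (blkE (s := s) (⟨0, hj⟩ : Fin j) * RB))) :
    fA * B - Fj = ∑ h : Fin n,
      Matrix.vecMulVec (fun p => X p h) (fun q => X⁻¹ h q) *
        (u * Γ * ((blkE (s := s) (⟨j - 1, by omega⟩ : Fin j))ᴴ *
          ((fAj - f (lam h) • (1 : Matrix (Fin j × Fin s) (Fin j × Fin s) ℂ)) *
            (Aj - (lam h) • (1 : Matrix (Fin j × Fin s) (Fin j × Fin s) ℂ))⁻¹) *
          blkE (s := s) (⟨0, hj⟩ : Fin j) * RB)) := by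
  obtain ⟨p, hfA, hfAj, hfl⟩ := hf
  have hXdet : IsUnit X.det := (Matrix.isUnit_iff_isUnit_det X).mp hX
  have hX'X : X⁻¹ * X = 1 := Matrix.nonsing_inv_mul X hXdet
  set E1 := blkE (s := s) (⟨0, hj⟩ : Fin j) with hE1
  set Ej := blkE (s := s) (⟨j - 1, by omega⟩ : Fin j) with hEjdef
  set C := u * Γ * Ejᴴ with hCdef
  set P : Fin n → Matrix (Fin n) (Fin n) ℂ :=
    fun h => Matrix.vecMulVec (fun p => X p h) (fun q => X⁻¹ h q) with hPdef
  set N := p.natDegree + 1 with hNdef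
  -- power decomposition of A
  have hdiagpow : ∀ m : ℕ, A ^ m = X * Matrix.diagonal (fun h => lam h ^ m) * X⁻¹ := by
    intro m
    have h1 : (↑hX.unit : Matrix (Fin n) (Fin n) ℂ) = X := hX.unit_spec
    have h2 : (↑hX.unit⁻¹ : Matrix (Fin n) (Fin n) ℂ) = X⁻¹ := by
      rw [Matrix.coe_units_inv, h1]
    have key := Units.conj_pow hX.unit (Matrix.diagonal lam) m
    rw [h1, h2] at key
    rw [hA, key, Matrix.diagonal_pow]
    rfl
  have hpow : ∀ m : ℕ, A ^ m = ∑ h : Fin n, lam h ^ m • P h := by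
    intro m
    rw [hdiagpow m, outer_decomp]
  -- invertibility of Aj - λ•1
  have hinv : ∀ h : Fin n,
      IsUnit (Aj - lam h • (1 : Matrix (Fin j × Fin s) (Fin j × Fin s) ℂ)).det := by
    intro h
    rw [show Aj - lam h • (1 : Matrix (Fin j × Fin s) (Fin j × Fin s) ℂ)
        = -(lam h • 1 - Aj) from (neg_sub _ _).symm, Matrix.det_neg]
    simp [isUnit_iff_ne_zero, hspec h]
  have hres : ∀ (h : Fin n) (k : ℕ),
      ∑ i ∈ Finset.range k, lam h ^ i • Aj ^ (k - 1 - i)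
        = (Aj ^ k - lam h ^ k • 1) * (Aj - lam h • 1)⁻¹ :=
    fun h k => geom_aux Aj (lam h) (hinv h) k
  -- the divided-difference matrix as a double sum
  have hG : ∀ h : Fin n,
      (fAj - f (lam h) • (1 : Matrix (Fin j × Fin s) (Fin j × Fin s) ℂ)) *
        (Aj - lam h • 1)⁻¹
      = ∑ k ∈ Finset.range N, ∑ i ∈ Finset.range k,
          (p.coeff k * lam h ^ i) • Aj ^ (k - 1 - i) := by
    intro h
    have e1 : ∑ k ∈ Finset.range N, ∑ i ∈ Finset.range k,
        (p.coeff k * lam h ^ i) • Aj ^ (k - 1 - i)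
        = ∑ k ∈ Finset.range N,
            (p.coeff k • (Aj ^ k - lam h ^ k • 1)) * (Aj - lam h • 1)⁻¹ := by
      refine Finset.sum_congr rfl fun k _ => ?_
      rw [Matrix.smul_mul, ← hres h k, Finset.smul_sum]
      exact Finset.sum_congr rfl fun i _ => by rw [smul_smul]
    rw [e1, ← Matrix.sum_mul]
    congr 1
    have e2 : ∑ k ∈ Finset.range N, p.coeff k • (Aj ^ k - lam h ^ k • 1)
        = (∑ k ∈ Finset.range N, p.coeff k • Aj ^ k)
          - (∑ k ∈ Finset.range N, p.coeff k * lam h ^ k) • 1 := by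
      rw [Finset.sum_smul]
      rw [← Finset.sum_sub_distrib]
      exact Finset.sum_congr rfl fun k _ => by rw [smul_sub, smul_smul]
    rw [e2, hfAj, Polynomial.aeval_eq_sum_range, hfl h, Polynomial.eval_eq_sum_range]
  -- step A
  have hstepA : fA * B - Fj = (Polynomial.aeval A p * U - U * fAj) * (E1 * RB) := by
    rw [hfA, hB, hFj, Matrix.sub_mul]
    simp only [Matrix.mul_assoc]
  -- step B
  have hstepB : Polynomial.aeval A p * U - U * fAj
      = ∑ k ∈ Finset.range N, p.coeff k •
          ∑ i ∈ Finset.range k, A ^ i * C * Aj ^ (k - 1 - i) := by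
    rw [hfAj, Polynomial.aeval_eq_sum_range, Polynomial.aeval_eq_sum_range,
      Matrix.sum_mul, Matrix.mul_sum, ← Finset.sum_sub_distrib]
    refine Finset.sum_congr rfl fun k _ => ?_
    rw [Matrix.smul_mul, Matrix.mul_smul, ← smul_sub]
    congr 1
    rw [arnoldi_pow A U Aj C harn k, add_sub_cancel_left]
  -- expand A ^ i via eigen-decomposition
  have hstepC : ∀ k ∈ Finset.range N,
      p.coeff k • ∑ i ∈ Finset.range k, A ^ i * C * Aj ^ (k - 1 - i)
        = ∑ i ∈ Finset.range k, ∑ h : Fin n,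
            (p.coeff k * lam h ^ i) • (P h * C * Aj ^ (k - 1 - i)) := by
    intro k _
    rw [Finset.smul_sum]
    refine Finset.sum_congr rfl fun i _ => ?_
    rw [hpow i, Matrix.sum_mul, Matrix.sum_mul, Finset.smul_sum]
    refine Finset.sum_congr rfl fun h _ => ?_
    rw [Matrix.smul_mul, Matrix.smul_mul, smul_smul]
  calc fA * B - Fj
      = (∑ k ∈ Finset.range N, ∑ i ∈ Finset.range k, ∑ h : Fin n,
          (p.coeff k * lam h ^ i) • (P h * C * Aj ^ (k - 1 - i))) * (E1 * RB) := by
        rw [hstepA, hstepB]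
        congr 1
        exact Finset.sum_congr rfl hstepC
    _ = ∑ h : Fin n, ∑ k ∈ Finset.range N, ∑ i ∈ Finset.range k,
          (p.coeff k * lam h ^ i) • (P h * C * Aj ^ (k - 1 - i) * (E1 * RB)) := by
        simp only [Matrix.sum_mul, Matrix.smul_mul]
        rw [show (∑ k ∈ Finset.range N, ∑ i ∈ Finset.range k, ∑ h : Fin n,
            (p.coeff k * lam h ^ i) • (P h * C * Aj ^ (k - 1 - i) * (E1 * RB)))
          = ∑ k ∈ Finset.range N, ∑ h : Fin n, ∑ i ∈ Finset.range k,
            (p.coeff k * lam h ^ i) • (P h * C * Aj ^ (k - 1 - i) * (E1 * RB))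
          from Finset.sum_congr rfl fun k _ => Finset.sum_comm]
        exact Finset.sum_comm
    _ = ∑ h : Fin n,
          P h * (u * Γ * (Ejᴴ *
            ((fAj - f (lam h) • (1 : Matrix (Fin j × Fin s) (Fin j × Fin s) ℂ)) *
              (Aj - (lam h) • (1 : Matrix (Fin j × Fin s) (Fin j × Fin s) ℂ))⁻¹) *
            E1 * RB)) := by
        refine Finset.sum_congr rfl fun h _ => ?_
        rw [hG h]
        simp only [hCdef, Matrix.mul_sum, Matrix.sum_mul, Matrix.mul_smul, Matrix.smul_mul,
          Matrix.mul_assoc]
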